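/- Middle Indexing pruning theorem (Theorem 1): let p, q : Fin d → ℝ, let 1 ≤ k ≤ d, fix a common index m with 0 ≤ m ≤ k-1, and define MI_min(u) = sorted(u)[m] and MI_max(u) = sorted(u)[m + (d-k)] (0-indexed order statistics of the coordinate values of u). If MI_max(p) < MI_min(q), then q does not k-dominate p. -/

import Mathlib

/-!
Let `t` be the `(m + d - k)`-th smallest coordinate of `p` and `w > t` the `m`-th smallest
coordinate of `q`. At least `m + d - k + 1` coordinates satisfy `p j ≤ t` and at least `d - m`
satisfy `w ≤ q j`, so at least `d - k + 1` coordinates satisfy both, and on each of them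
`p j ≤ t < w ≤ q j`. Hence `q j ≤ p j` holds on at most `k - 1` coordinates.
-/

noncomputable def sortedCoords {d : ℕ} (u : Fin d → ℝ) : List ℝ :=
  (List.ofFn u).insertionSort (· ≤ ·)

def kDominates {d : ℕ} (k : ℕ) (a b : Fin d → ℝ) : Prop :=
  (∃ S' : Finset (Fin d), S'.card ≥ k ∧ ∀ j ∈ S', a j ≤ b j) ∧ ∃ j, a j < b j

open Finset

namespace List

variable {α : Type*} [Preorder α] [DecidableLE α] {s : List α}

theorem Pairwise.succ_le_countP_le_getElem (hs : s.Pairwise (· ≤ ·)) (i : ℕ)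
    (hi : i < s.length) : i + 1 ≤ s.countP (· ≤ s[i]) := by
  have htake : (s.take (i + 1)).countP (· ≤ s[i]) = (s.take (i + 1)).length := by
    refine countP_eq_length.mpr fun a ha => ?_
    obtain ⟨j, hj, rfl⟩ := mem_take_iff_getElem.mp ha
    simpa using hs.rel_get_of_le (a := ⟨j, by omega⟩) (b := ⟨i, hi⟩) (by simp; omega)
  have := (take_sublist (i + 1) s).countP_le (p := (· ≤ s[i]))
  rw [htake, length_take] at this
  omega

theorem Pairwise.length_sub_le_countP_getElem_le (hs : s.Pairwise (· ≤ ·)) (i : ℕ)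
    (hi : i < s.length) : s.length - i ≤ s.countP (s[i] ≤ ·) := by
  have hdrop : (s.drop i).countP (s[i] ≤ ·) = (s.drop i).length := by
    refine countP_eq_length.mpr fun a ha => ?_
    obtain ⟨j, hj, rfl⟩ := getElem_of_mem ha
    rw [getElem_drop]
    simpa using
      hs.rel_get_of_le (a := ⟨i, hi⟩) (b := ⟨i + j, by simp at hj; omega⟩) (by simp)
  have := (drop_sublist i s).countP_le (p := (s[i] ≤ ·))
  rw [hdrop, length_drop] at this
  omega

end List

theorem Fin.card_filter_univ_eq_countP_ofFn {α : Type*} {d : ℕ} (u : Fin d → α)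
    (P : α → Prop) [DecidablePred P] : #{j | P (u j)} = (List.ofFn u).countP P := by
  rw [card_def, filter_val, ← Multiset.countP_map, Fin.univ_val_map, Multiset.coe_countP]

theorem card_add_card_add_card_le_of_lt {ι α : Type*} [Fintype ι] [DecidableEq ι]
    [LinearOrder α] {p q : ι → α} {t w : α} (htw : t < w) {S : Finset ι}
    (hS : ∀ j ∈ S, q j ≤ p j) :
    #S + #{j | p j ≤ t} + #{j | w ≤ q j} ≤ 2 * Fintype.card ι := by
  set A : Finset ι := {j | p j ≤ t}
  set B : Finset ι := {j | w ≤ q j}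
  have hdisj : Disjoint S (A ∩ B) := by
    refine disjoint_left.mpr fun j hjS hjAB => ?_
    simp only [A, B, mem_inter, mem_filter, mem_univ, true_and] at hjAB
    exact not_lt.mpr (hS j hjS) (hjAB.1.trans_lt (htw.trans_le hjAB.2))
  have h1 : #S + #(A ∩ B) ≤ Fintype.card ι := by
    rw [← card_union_of_disjoint hdisj]; exact card_le_univ _
  have h2 : #(A ∪ B) + #(A ∩ B) = #A + #B := card_union_add_card_inter A B
  have h3 : #(A ∪ B) ≤ Fintype.card ι := card_le_univ _
  omega

theorem length_sortedCoords {d : ℕ} (u : Fin d → ℝ) : (sortedCoords u).length = d := by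
  simp [sortedCoords]

theorem sortedCoords_perm {d : ℕ} (u : Fin d → ℝ) : (sortedCoords u).Perm (List.ofFn u) :=
  List.perm_insertionSort _ _

theorem pairwise_sortedCoords {d : ℕ} (u : Fin d → ℝ) :
    (sortedCoords u).Pairwise (· ≤ ·) :=
  List.pairwise_insertionSort _ _

theorem succ_le_card_filter_le_sortedCoords_getElem {d : ℕ} (u : Fin d → ℝ) (i : ℕ)
    (hi : i < (sortedCoords u).length) : i + 1 ≤ #{j | u j ≤ (sortedCoords u)[i]} := by
  rw [Fin.card_filter_univ_eq_countP_ofFn u (· ≤ _), ← (sortedCoords_perm u).countP_eq]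
  exact (pairwise_sortedCoords u).succ_le_countP_le_getElem i hi

theorem sub_le_card_filter_sortedCoords_getElem_le {d : ℕ} (u : Fin d → ℝ) (i : ℕ)
    (hi : i < (sortedCoords u).length) : d - i ≤ #{j | (sortedCoords u)[i] ≤ u j} := by
  rw [Fin.card_filter_univ_eq_countP_ofFn u (_ ≤ ·), ← (sortedCoords_perm u).countP_eq]
  simpa only [length_sortedCoords] using
    (pairwise_sortedCoords u).length_sub_le_countP_getElem_le i hi

theorem middle_indexing_pruning {d k m : ℕ} (p q : Fin d → ℝ)
    (hk1 : 1 ≤ k) (hkd : k ≤ d) (hm : m ≤ k - 1)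
    (h : (sortedCoords p)[m + (d - k)]'(by
        simp only [sortedCoords, List.length_insertionSort, List.length_ofFn]; omega)
      < (sortedCoords q)[m]'(by
        simp only [sortedCoords, List.length_insertionSort, List.length_ofFn]; omega)) :
    ¬ kDominates k q p := by
  rintro ⟨⟨S, hSk, hSle⟩, -⟩
  have hp := succ_le_card_filter_le_sortedCoords_getElem p (m + (d - k))
    (by rw [length_sortedCoords]; omega)
  have hq := sub_le_card_filter_sortedCoords_getElem_le q m
    (by rw [length_sortedCoords]; omega)
  have hsum := card_add_card_add_card_le_of_lt h hSle
  rw [Fintype.card_fin] at hsum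
  omega
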